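/- Let U₂ denote the unitary group of 2×2 complex matrices, regarded as a topological group, and let σ : U₂ → U₂ be the continuous group automorphism given by entrywise complex conjugation. Consider the topological group L^{τ̃_c}U₂ = { g : ℝ/2πℤ → U₂ continuous | g(θ) = σ(g(θ + π)) for all θ } (a subgroup of the group of continuous maps from the circle ℝ/2πℤ to U₂ under pointwise multiplication, with the compact-open topology), and the twisted loop group L_σU₂ = { h : [0,1] → U₂ continuous | h(0) = σ(h(1)) } (a subgroup of the group of continuous maps from [0,1] to U₂ under pointwise multiplication, with the compact-open topology). Then the restriction map sending g to the path t ↦ g(πt), t ∈ [0,1], is an isomorphism of topological groups from L^{τ̃_c}U₂ onto L_σU₂. -/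

import Mathlib

/-! **Statement 7.** The real loop group of type (c),
`L^{τ̃_c}U₂ = { g : ℝ/2πℤ → U₂ continuous | g(θ) = σ(g(θ+π)) }`, is isomorphic as a
topological group to the twisted loop group
`L_σU₂ = { h : [0,1] → U₂ continuous | h(0) = σ(h(1)) }`, via the restriction map
`g ↦ (t ↦ g(πt))`, where `σ` is entrywise complex conjugation on `U₂`. -/

noncomputable section

/-- The unitary group of 2×2 complex matrices, as a topological group. -/
abbrev U2 : Submonoid (Matrix (Fin 2) (Fin 2) ℂ) := Matrix.unitaryGroup (Fin 2) ℂ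

instance : IsTopologicalGroup U2 where
  continuous_mul := continuous_mul
  continuous_inv := continuous_induced_rng.2 (continuous_star.comp continuous_subtype_val)

/-- The real loop group of type (c) determined by an automorphism `σ` of `U₂`:
continuous maps `g : ℝ/2πℤ → U₂` with `g(θ) = σ(g(θ + π))` for all `θ`, as a subgroup of
the topological group of continuous loops in `U₂` under pointwise multiplication (with the
compact-open topology). -/
def realLoopGroupC (σ : U2 ≃* U2) : Subgroup C(AddCircle (2 * Real.pi), U2) where
  carrier := {g | ∀ θ : AddCircle (2 * Real.pi), g θ = σ (g (θ + (Real.pi : AddCircle (2 * Real.pi))))}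
  mul_mem' := by
    intro a b ha hb θ
    simp only [ContinuousMap.mul_apply, ha θ, hb θ, map_mul]
  one_mem' := by
    intro θ
    simp
  inv_mem' := by
    intro a ha θ
    simp only [ContinuousMap.inv_apply, ha θ, map_inv]

/-- The twisted loop group determined by an automorphism `σ` of `U₂`: continuous paths
`h : [0,1] → U₂` with `h(0) = σ(h(1))`, as a subgroup of the topological group of continuous
maps `[0,1] → U₂` under pointwise multiplication (with the compact-open topology). -/
def twistedLoopGroup (σ : U2 ≃* U2) : Subgroup C(unitInterval, U2) where
  carrier := {h | h 0 = σ (h 1)}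
  mul_mem' := by
    intro a b ha hb
    simp only [Set.mem_setOf_eq, ContinuousMap.mul_apply] at *
    rw [ha, hb, map_mul]
  one_mem' := by simp
  inv_mem' := by
    intro a ha
    simp only [Set.mem_setOf_eq, ContinuousMap.inv_apply] at *
    rw [ha, map_inv]

/-- The embedding of `[0,1]` in the circle `ℝ/2πℤ` as a half circle, `t ↦ πt`. -/
def halfCircle : C(unitInterval, AddCircle (2 * Real.pi)) :=
  ⟨fun t => ((Real.pi * (t : ℝ) : ℝ) : AddCircle (2 * Real.pi)),
    (AddCircle.continuous_mk' _).comp (continuous_const.mul continuous_subtype_val)⟩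


/-! The circle `ℝ/2πℤ` is two copies of `[0,1]`, embedded by `t ↦ πt` and `t ↦ πt + π`, glued at
their endpoints (`halfTurns`, a quotient map since it is a continuous surjection from a compact
space onto a Hausdorff one). A path `h` with `h 0 = σ (h 1)` descends along it to the loop that is
`h` on the first copy and `σ ∘ h` on the second; as `σ` is an involution, this loop satisfies
`g (θ + π) = σ (g θ)`, and it is the only such loop restricting to `h`. The gluing depends
continuously on `h` because `id × halfTurns` is still a quotient map, being proper. -/

open Function Real

local notation "I" => unitInterval
local notation "𝕋" => AddCircle (2 * π)

instance : Fact (0 < 2 * π) := ⟨two_pi_pos⟩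

lemma halfCircle_apply (t : I) : halfCircle t = ((π * t : ℝ) : 𝕋) := rfl

lemma halfCircle_zero : halfCircle 0 = 0 := by simp [halfCircle_apply]

lemma halfCircle_one : halfCircle 1 = (π : 𝕋) := by simp [halfCircle_apply]

lemma pi_add_pi : ((π : ℝ) : 𝕋) + π = 0 := by
  rw [← AddCircle.coe_add, ← two_mul, AddCircle.coe_period]

lemma add_pi_add_pi (θ : 𝕋) : θ + π + π = θ := by
  rw [add_assoc, pi_add_pi, add_zero]

lemma pi_mul_mem_Ico {x : ℝ} (h0 : 0 ≤ x) (h2 : x < 2) : π * x ∈ Set.Ico 0 (0 + 2 * π) :=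
  ⟨by positivity, by nlinarith [pi_pos]⟩

lemma halfCircle_injective : Injective halfCircle := fun s t hst =>
  Subtype.ext <| mul_left_cancel₀ pi_ne_zero <|
    (AddCircle.coe_eq_coe_iff_of_mem_Ico (pi_mul_mem_Ico s.2.1 (by linarith [s.2.2]))
      (pi_mul_mem_Ico t.2.1 (by linarith [t.2.2]))).1 hst

lemma halfCircle_eq_add_pi {s t : I} (hst : halfCircle s = halfCircle t + π) :
    s = 0 ∧ t = 1 ∨ s = 1 ∧ t = 0 := by
  rcases eq_or_lt_of_le t.2.2 with ht | ht
  · obtain rfl : t = 1 := Subtype.ext ht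
    rw [halfCircle_one, pi_add_pi, ← halfCircle_zero] at hst
    exact .inl ⟨halfCircle_injective hst, rfl⟩
  · rw [halfCircle_apply, halfCircle_apply, ← AddCircle.coe_add, ← mul_add_one,
      AddCircle.coe_eq_coe_iff_of_mem_Ico (pi_mul_mem_Ico s.2.1 (by linarith [s.2.2]))
        (pi_mul_mem_Ico (by linarith [t.2.1]) (by linarith))] at hst
    have hst := mul_left_cancel₀ pi_ne_zero hst
    have ht0 : (t : ℝ) = 0 := by linarith [s.2.2, t.2.1]
    exact .inr ⟨Subtype.ext (by simp [hst, ht0]), Subtype.ext ht0⟩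

def halfTurns : C(I ⊕ I, 𝕋) :=
  ⟨Sum.elim halfCircle (halfCircle · + π),
    halfCircle.continuous.sumElim (halfCircle.continuous.add continuous_const)⟩

lemma surjective_halfTurns : Surjective halfTurns := by
  intro θ
  obtain ⟨⟨x, hx0, hx⟩, rfl⟩ := (AddCircle.equivIco (2 * π) 0).symm.surjective θ
  rw [zero_add] at hx
  rcases le_or_gt x π with hxπ | hxπ
  · refine ⟨.inl ⟨x / π, by positivity, (div_le_one pi_pos).2 hxπ⟩, ?_⟩
    change ((π * (x / π) : ℝ) : 𝕋) = _
    rw [mul_div_cancel₀ _ pi_ne_zero]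
    rfl
  · refine ⟨.inr ⟨x / π - 1, ?_, ?_⟩, ?_⟩
    · rw [sub_nonneg, one_le_div pi_pos]
      exact hxπ.le
    · rw [sub_le_iff_le_add, div_le_iff₀ pi_pos]
      linarith
    · change ((π * (x / π - 1) : ℝ) : 𝕋) + π = _
      rw [← AddCircle.coe_add, mul_sub_one, mul_div_cancel₀ _ pi_ne_zero, sub_add_cancel]
      rfl

lemma isQuotientMap_halfTurns : Topology.IsQuotientMap halfTurns :=
  halfTurns.continuous.isProperMap.isClosedMap.isQuotientMap halfTurns.continuous
    surjective_halfTurns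

section TwistedLoop

variable {X : Type*} [TopologicalSpace X] (σ : C(X, X))

def twistedDouble (h : C(I, X)) : C(I ⊕ I, X) :=
  ⟨Sum.elim h (σ ∘ h), h.continuous.sumElim (σ.continuous.comp h.continuous)⟩

variable {σ} (hσ : Involutive σ)
include hσ

lemma factorsThrough_twistedDouble {h : C(I, X)} (hh : h 0 = σ (h 1)) :
    FactorsThrough (twistedDouble σ h) halfTurns := by
  have hh' : h 1 = σ (h 0) := by rw [hh, hσ]
  rintro (s | s) (t | t) hst
  · rw [halfCircle_injective hst]
  · rcases halfCircle_eq_add_pi hst with ⟨rfl, rfl⟩ | ⟨rfl, rfl⟩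
    exacts [hh, hh']
  · rcases halfCircle_eq_add_pi hst.symm with ⟨rfl, rfl⟩ | ⟨rfl, rfl⟩
    exacts [hh.symm, hh'.symm]
  · rw [halfCircle_injective (add_right_cancel hst)]

variable (σ) in
def twistedLoop (h : C(I, X)) (hh : h 0 = σ (h 1)) : C(𝕋, X) :=
  isQuotientMap_halfTurns.lift (twistedDouble σ h) (factorsThrough_twistedDouble hσ hh)

variable {h : C(I, X)} (hh : h 0 = σ (h 1))

lemma twistedLoop_halfTurns (s : I ⊕ I) :
    twistedLoop σ hσ h hh (halfTurns s) = twistedDouble σ h s :=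
  DFunLike.congr_fun
    (isQuotientMap_halfTurns.lift_comp (twistedDouble σ h) (factorsThrough_twistedDouble hσ hh)) s

lemma twistedLoop_comp_halfCircle : (twistedLoop σ hσ h hh).comp halfCircle = h :=
  ContinuousMap.ext fun t => twistedLoop_halfTurns hσ hh (.inl t)

lemma twistedLoop_add_pi (θ : 𝕋) :
    twistedLoop σ hσ h hh (θ + π) = σ (twistedLoop σ hσ h hh θ) := by
  obtain ⟨t | t, rfl⟩ := surjective_halfTurns θ
  · change twistedLoop σ hσ h hh (halfTurns (.inr t)) = _
    rw [twistedLoop_halfTurns, twistedLoop_halfTurns]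
    rfl
  · change twistedLoop σ hσ h hh (halfCircle t + π + π) = _
    rw [add_pi_add_pi]
    change twistedLoop σ hσ h hh (halfTurns (.inl t)) = _
    rw [twistedLoop_halfTurns, twistedLoop_halfTurns]
    exact (hσ (h t)).symm

theorem continuous_twistedLoop {T : Type*} [TopologicalSpace T] {f : T → C(I, X)}
    (hf : Continuous f) (hf0 : ∀ t, f t 0 = σ (f t 1)) :
    Continuous fun t => twistedLoop σ hσ (f t) (hf0 t) := by
  refine ContinuousMap.continuous_of_continuous_uncurry _ ?_
  have hq : Topology.IsQuotientMap (Prod.map id halfTurns : T × (I ⊕ I) → T × 𝕋) :=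
    (isProperMap_id.prodMap halfTurns.continuous.isProperMap).isClosedMap.isQuotientMap
      (continuous_id.prodMap halfTurns.continuous) (surjective_id.prodMap surjective_halfTurns)
  rw [hq.continuous_iff]
  have heval : Continuous fun p : T × I => f p.1 p.2 :=
    continuous_eval.comp (hf.prodMap continuous_id)
  convert (heval.sumElim (σ.continuous.comp heval)).comp
    (Homeomorph.prodSumDistrib : T × (I ⊕ I) ≃ₜ T × I ⊕ T × I).continuous using 1
  ext ⟨t, s | s⟩
  exacts [twistedLoop_halfTurns hσ (hf0 t) (.inl s), twistedLoop_halfTurns hσ (hf0 t) (.inr s)]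

lemma comp_halfCircle_zero_eq {g : C(𝕋, X)} (hg : ∀ θ, g (θ + π) = σ (g θ)) :
    g.comp halfCircle 0 = σ (g.comp halfCircle 1) := by
  have hg0 := hg 0
  rw [zero_add] at hg0
  simp only [ContinuousMap.comp_apply, halfCircle_zero, halfCircle_one, hg0]
  exact (hσ _).symm

lemma twistedLoop_comp_halfCircle_eq {g : C(𝕋, X)} (hg : ∀ θ, g (θ + π) = σ (g θ)) :
    twistedLoop σ hσ (g.comp halfCircle) (comp_halfCircle_zero_eq hσ hg) = g := by
  ext θ
  obtain ⟨t | t, rfl⟩ := surjective_halfTurns θ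
  · exact twistedLoop_halfTurns hσ _ (.inl t)
  · exact (twistedLoop_halfTurns hσ _ (.inr t)).trans (hg (halfCircle t)).symm

end TwistedLoop

section UnitaryLoops

variable {σ : U2 ≃* U2}

lemma continuous_of_apply_eq_map_conj
    (hσ : ∀ A : U2, (σ A : Matrix (Fin 2) (Fin 2) ℂ) = (A : Matrix _ _ ℂ).map (starRingEnd ℂ)) :
    Continuous σ :=
  continuous_induced_rng.2 <| by
    rw [Function.comp_def, funext hσ]
    exact continuous_subtype_val.matrix_map Complex.continuous_conj

lemma involutive_of_apply_eq_map_conj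
    (hσ : ∀ A : U2, (σ A : Matrix (Fin 2) (Fin 2) ℂ) = (A : Matrix _ _ ℂ).map (starRingEnd ℂ)) :
    Involutive σ := fun A => by
  ext i j
  simp [hσ]

lemma mem_realLoopGroupC_iff (hi : Involutive σ) {g : C(𝕋, U2)} :
    g ∈ realLoopGroupC σ ↔ ∀ θ : 𝕋, g (θ + π) = σ (g θ) :=
  forall_congr' fun θ => by rw [← hi.eq_iff, eq_comm]

variable (hc : Continuous σ) (hi : Involutive σ)

def restrictHalfCircle : realLoopGroupC σ ≃* twistedLoopGroup σ where
  toFun g := ⟨(g : C(𝕋, U2)).comp halfCircle,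
    comp_halfCircle_zero_eq (σ := ⟨σ, hc⟩) hi ((mem_realLoopGroupC_iff hi).1 g.2)⟩
  invFun h := ⟨twistedLoop ⟨σ, hc⟩ hi h h.2,
    (mem_realLoopGroupC_iff hi).2 (twistedLoop_add_pi (σ := ⟨σ, hc⟩) hi h.2)⟩
  left_inv g :=
    Subtype.ext (twistedLoop_comp_halfCircle_eq hi ((mem_realLoopGroupC_iff hi).1 g.2))
  right_inv h := Subtype.ext (twistedLoop_comp_halfCircle (σ := ⟨σ, hc⟩) hi h.2)
  map_mul' _ _ := rfl

lemma continuous_restrictHalfCircle : Continuous (restrictHalfCircle hc hi) :=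
  continuous_induced_rng.2 <|
    (ContinuousMap.continuous_precomp halfCircle).comp continuous_subtype_val

lemma continuous_restrictHalfCircle_symm : Continuous (restrictHalfCircle hc hi).symm :=
  continuous_induced_rng.2 <|
    continuous_twistedLoop (σ := ⟨σ, hc⟩) hi continuous_subtype_val fun h => h.2

end UnitaryLoops

theorem stmt7_general (σ : U2 ≃* U2)
    (hσ : ∀ A : U2, ((σ A : Matrix (Fin 2) (Fin 2) ℂ))
      = (A : Matrix (Fin 2) (Fin 2) ℂ).map (starRingEnd ℂ)) :
    ∃ e : realLoopGroupC σ ≃* twistedLoopGroup σ,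
      Continuous e ∧ Continuous e.symm ∧
      ∀ g : realLoopGroupC σ,
        (e g : C(unitInterval, U2)) = (g : C(AddCircle (2 * Real.pi), U2)).comp halfCircle := by
  have hc := continuous_of_apply_eq_map_conj hσ
  have hi := involutive_of_apply_eq_map_conj hσ
  exact ⟨restrictHalfCircle hc hi, continuous_restrictHalfCircle hc hi,
    continuous_restrictHalfCircle_symm hc hi, fun _ => rfl⟩

theorem stmt7 (σ : U2 ≃* U2) (hσcont : Continuous σ)
    (hσ : ∀ A : U2, ((σ A : Matrix (Fin 2) (Fin 2) ℂ))
      = (A : Matrix (Fin 2) (Fin 2) ℂ).map (starRingEnd ℂ)) :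
    ∃ e : realLoopGroupC σ ≃* twistedLoopGroup σ,
      Continuous e ∧ Continuous e.symm ∧
      ∀ g : realLoopGroupC σ,
        (e g : C(unitInterval, U2)) = (g : C(AddCircle (2 * Real.pi), U2)).comp halfCircle :=
  stmt7_general σ hσ

end
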